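/- Under the standing hypotheses on f, if o is an open element of D with f(⊥) ≤ o, then ■_f(o) = sSup { eA a | a ∈ A, eA a ≤ ■_f(o) }, and ■_f(o) is an open element of C. (Lemma 4.10(1).) -/

import Mathlib

/-- An element is completely join-prime. -/
def CJPrime {C : Type*} [CompleteLattice C] (j : C) : Prop :=
  j ≠ ⊥ ∧ ∀ S : Set C, j ≤ sSup S → ∃ s ∈ S, j ≤ s

/-- An element is completely meet-prime. -/
def CMPrime {C : Type*} [CompleteLattice C] (m : C) : Prop :=
  m ≠ ⊤ ∧ ∀ S : Set C, sInf S ≤ m → ∃ s ∈ S, s ≤ m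

/-- ◇_f(u) = ⋁ { f j | j completely join-prime, j ≤ u }. -/
def diam {C D : Type*} [CompleteLattice C] [CompleteLattice D]
    (f : C → D) (u : C) : D :=
  sSup (f '' {j | CJPrime j ∧ j ≤ u})

/-- ■_f(v) = ⋁ { j | j completely join-prime, f j ≤ v }. -/
def bsq {C D : Type*} [CompleteLattice C] [CompleteLattice D]
    (f : C → D) (v : D) : C :=
  sSup {j | CJPrime j ∧ f j ≤ v}

/-- □_g(u) = ⋀ { g m | m completely meet-prime, u ≤ m }. -/
def boxg {C D : Type*} [CompleteLattice C] [CompleteLattice D]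
    (g : C → D) (u : C) : D :=
  sInf (g '' {m | CMPrime m ∧ u ≤ m})

/-- ◆_g(v) = ⋀ { m | m completely meet-prime, v ≤ g m }. -/
def bdiam {C D : Type*} [CompleteLattice C] [CompleteLattice D]
    (g : C → D) (v : D) : C :=
  sInf {m | CMPrime m ∧ v ≤ g m}

/-- Every element is the sup of the completely join-primes below it. -/
def JoinPerfect (C : Type*) [CompleteLattice C] : Prop :=
  ∀ u : C, u = sSup {j | CJPrime j ∧ j ≤ u}

/-- Every element is the inf of the completely meet-primes above it. -/
def MeetPerfect (C : Type*) [CompleteLattice C] : Prop :=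
  ∀ u : C, u = sInf {m | CMPrime m ∧ u ≤ m}

/-- `(C, e)` is a canonical extension of the bounded distributive lattice `A`. -/
structure IsCanonicalExtension {A C : Type*} [DistribLattice A] [BoundedOrder A]
    [CompleteLattice C] (e : A → C) : Prop where
  injective : Function.Injective e
  map_bot : e ⊥ = ⊥
  map_top : e ⊤ = ⊤
  map_inf : ∀ a b : A, e (a ⊓ b) = e a ⊓ e b
  map_sup : ∀ a b : A, e (a ⊔ b) = e a ⊔ e b
  dense_joinOfMeets : ∀ u : C, ∃ 𝒮 : Set (Set A),
      u = sSup ((fun S => sInf (e '' S)) '' 𝒮)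
  dense_meetOfJoins : ∀ u : C, ∃ 𝒮 : Set (Set A),
      u = sInf ((fun S => sSup (e '' S)) '' 𝒮)
  compact : ∀ S T : Set A, sInf (e '' S) ≤ sSup (e '' T) →
      ∃ F : Finset A, ↑F ⊆ S ∧ ∃ G : Finset A, ↑G ⊆ T ∧ F.inf id ≤ G.sup id

/-- Closed elements of the canonical extension: meets of subsets of `e(A)`. -/
def ClosedElem {A C : Type*} [CompleteLattice C] (e : A → C) (x : C) : Prop :=
  ∃ S : Set A, x = sInf (e '' S)

/-- Open elements of the canonical extension: joins of subsets of `e(A)`. -/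
def OpenElem {A C : Type*} [CompleteLattice C] (e : A → C) (x : C) : Prop :=
  ∃ S : Set A, x = sSup (e '' S)

/-- Nonempty downward-directed family. -/
def DownDir {C : Type*} [Preorder C] (𝒞 : Set C) : Prop :=
  𝒞.Nonempty ∧ ∀ x ∈ 𝒞, ∀ y ∈ 𝒞, ∃ z ∈ 𝒞, z ≤ x ∧ z ≤ y

/-- Nonempty upward-directed family. -/
def UpDir {C : Type*} [Preorder C] (𝒪 : Set C) : Prop :=
  𝒪.Nonempty ∧ ∀ x ∈ 𝒪, ∀ y ∈ 𝒪, ∃ z ∈ 𝒪, x ≤ z ∧ y ≤ z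

/-- `h` preserves down-directed meets of closed elements. -/
def ClosedEsakia {A C D : Type*} [CompleteLattice C] [CompleteLattice D]
    (e : A → C) (h : C → D) : Prop :=
  ∀ 𝒞 : Set C, DownDir 𝒞 → (∀ c ∈ 𝒞, ClosedElem e c) →
    h (sInf 𝒞) = sInf (h '' 𝒞)

/-- `h` preserves up-directed joins of open elements. -/
def OpenEsakia {A C D : Type*} [CompleteLattice C] [CompleteLattice D]
    (e : A → C) (h : C → D) : Prop :=
  ∀ 𝒪 : Set C, UpDir 𝒪 → (∀ o ∈ 𝒪, OpenElem e o) →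
    h (sSup 𝒪) = sSup (h '' 𝒪)


/-
Every completely join-prime `j` of `C` is closed, hence the meet of the down-directed family of
`eA a` with `a` a finite meet of elements above `j`. Since `f` is closed Esakia, `f j` is the meet
of the down-directed family of closed elements `f (eA a)`; if `f j ≤ o` with `o` open, compactness
of `D` yields one such `a` with `j ≤ eA a` and `f (eA a) ≤ o`. Join-perfectness of `C` then
gives `eA a ≤ ■_f o`, so `■_f o` is the join of the `eA a` below it, in particular open.
-/

theorem DownDir.exists_le_of_finset {C : Type*} [Preorder C] {𝒦 : Set C} (h𝒦 : DownDir 𝒦)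
    {ι : Type*} (s : Finset ι) (g : ι → C) (hg : ∀ i ∈ s, g i ∈ 𝒦) :
    ∃ z ∈ 𝒦, ∀ i ∈ s, z ≤ g i := by
  induction s using Finset.cons_induction with
  | empty =>
    obtain ⟨z, hz⟩ := h𝒦.1
    exact ⟨z, hz, by simp⟩
  | cons i s hi ih =>
    obtain ⟨z, hz, hzs⟩ := ih fun k hk => hg k (Finset.mem_cons_of_mem hk)
    obtain ⟨w, hw, hwi, hwz⟩ := h𝒦.2 _ (hg i (Finset.mem_cons_self i s)) z hz
    exact ⟨w, hw, (Finset.forall_mem_cons hi _).2 ⟨hwi, fun k hk => hwz.trans (hzs k hk)⟩⟩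

def finInfs {A : Type*} [SemilatticeInf A] [OrderTop A] (S : Set A) : Set A :=
  (fun F : Finset A => F.inf id) '' {F | ↑F ⊆ S}

namespace IsCanonicalExtension

variable {A C : Type*} [DistribLattice A] [BoundedOrder A] [CompleteLattice C] {e : A → C}

theorem monotone (he : IsCanonicalExtension e) : Monotone e := fun a b hab => by
  simpa [← he.map_inf, inf_eq_left.2 hab] using inf_le_right (a := e a) (b := e b)

theorem map_finset_inf (he : IsCanonicalExtension e) (F : Finset A) :
    e (F.inf id) = sInf (e '' ↑F) := by
  classical
  induction F using Finset.induction with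
  | empty => simp [he.map_top]
  | insert a F _ ih =>
    rw [Finset.inf_insert, he.map_inf, ih, Finset.coe_insert, Set.image_insert_eq, sInf_insert]
    rfl

theorem map_finset_sup (he : IsCanonicalExtension e) (G : Finset A) :
    e (G.sup id) = sSup (e '' ↑G) := by
  classical
  induction G using Finset.induction with
  | empty => simp [he.map_bot]
  | insert a G _ ih =>
    rw [Finset.sup_insert, he.map_sup, ih, Finset.coe_insert, Set.image_insert_eq, sSup_insert]
    rfl

theorem closedElem_of_cjPrime (he : IsCanonicalExtension e) {j : C} (hj : CJPrime j) :
    ClosedElem e j := by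
  obtain ⟨𝒮, h𝒮⟩ := he.dense_joinOfMeets j
  obtain ⟨_, ⟨S, hS, rfl⟩, hjS⟩ := hj.2 _ h𝒮.le
  exact ⟨S, le_antisymm hjS (h𝒮 ▸ le_sSup ⟨S, hS, rfl⟩)⟩

theorem sInf_image_finInfs (he : IsCanonicalExtension e) (S : Set A) :
    sInf (e '' finInfs S) = sInf (e '' S) := by
  refine le_antisymm (sInf_le_sInf (Set.image_mono fun a ha => ⟨{a}, by simpa using ha, by simp⟩))
    (le_sInf ?_)
  rintro _ ⟨_, ⟨F, hFS, rfl⟩, rfl⟩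
  exact he.map_finset_inf F ▸ sInf_le_sInf (Set.image_mono hFS)

theorem downDir_image_finInfs (he : IsCanonicalExtension e) (S : Set A) :
    DownDir (e '' finInfs S) := by
  classical
  refine ⟨⟨e ⊤, ⊤, ⟨∅, by simp⟩, rfl⟩, ?_⟩
  rintro _ ⟨_, ⟨F, hF, rfl⟩, rfl⟩ _ ⟨_, ⟨G, hG, rfl⟩, rfl⟩
  refine ⟨_, ⟨_, ⟨F ∪ G, by simpa using Set.union_subset hF hG, rfl⟩, rfl⟩, ?_, ?_⟩
  · exact he.monotone (Finset.inf_mono Finset.subset_union_left)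
  · exact he.monotone (Finset.inf_mono Finset.subset_union_right)

theorem exists_le_of_sInf_le (he : IsCanonicalExtension e) {𝒦 : Set C} (h𝒦 : DownDir 𝒦)
    (hclosed : ∀ k ∈ 𝒦, ClosedElem e k) {o : C} (ho : OpenElem e o) (hle : sInf 𝒦 ≤ o) :
    ∃ k ∈ 𝒦, k ≤ o := by
  choose! T hT using hclosed
  obtain ⟨U, rfl⟩ := ho
  have hTle : sInf (e '' ⋃ k ∈ 𝒦, T k) ≤ sSup (e '' U) := by
    refine le_trans (le_sInf fun k hk => ?_) hle
    exact hT k hk ▸ sInf_le_sInf (Set.image_mono (Set.subset_biUnion_of_mem hk))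
  obtain ⟨F, hFT, G, hGU, hFG⟩ := he.compact _ U hTle
  have hF : ∀ b ∈ F, ∃ k ∈ 𝒦, b ∈ T k := fun b hb => by simpa using hFT hb
  choose! kb hkb using hF
  obtain ⟨k, hk, hkF⟩ := h𝒦.exists_le_of_finset F kb fun b hb => (hkb b hb).1
  refine ⟨k, hk, ?_⟩
  calc k ≤ sInf (e '' ↑F) := le_sInf <| Set.forall_mem_image.2 fun b hb =>
        (hkF b hb).trans ((hT _ (hkb b hb).1).trans_le (sInf_le ⟨b, (hkb b hb).2, rfl⟩))
    _ = e (F.inf id) := (he.map_finset_inf F).symm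
    _ ≤ e (G.sup id) := he.monotone hFG
    _ = sSup (e '' ↑G) := he.map_finset_sup G
    _ ≤ sSup (e '' U) := sSup_le_sSup (Set.image_mono hGU)

end IsCanonicalExtension

theorem le_bsq_of_map_le {C D : Type*} [CompleteLattice C] [CompleteLattice D]
    (hCj : JoinPerfect C) {f : C → D} (hf : Monotone f) {u : C} {v : D} (h : f u ≤ v) :
    u ≤ bsq f v := by
  rw [hCj u]
  exact sSup_le_sSup fun j hj => ⟨hj.1, (hf hj.2).trans h⟩

theorem exists_le_map_le_of_cjPrime {A B C D : Type*} [DistribLattice A] [BoundedOrder A]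
    [DistribLattice B] [BoundedOrder B] [CompleteLattice C] [CompleteLattice D]
    {eA : A → C} {eB : B → D} (hceA : IsCanonicalExtension eA) (hceB : IsCanonicalExtension eB)
    {f : C → D} (hf : Monotone f) (hfcE : ClosedEsakia eA f)
    (hcl : ∀ a : A, ClosedElem eB (f (eA a))) {o : D} (ho : OpenElem eB o)
    {j : C} (hj : CJPrime j) (hjo : f j ≤ o) :
    ∃ a : A, j ≤ eA a ∧ f (eA a) ≤ o := by
  obtain ⟨S, rfl⟩ := hceA.closedElem_of_cjPrime hj
  have hdir := hceA.downDir_image_finInfs S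
  have hfS : f (sInf (eA '' S)) = sInf (f '' (eA '' finInfs S)) := by
    rw [← hceA.sInf_image_finInfs S]
    exact hfcE _ hdir (Set.forall_mem_image.2 fun a _ => ⟨{a}, by simp⟩)
  have hfdir : DownDir (f '' (eA '' finInfs S)) := by
    obtain ⟨⟨x, hx⟩, hxy⟩ := hdir
    refine ⟨⟨f x, x, hx, rfl⟩, ?_⟩
    rintro _ ⟨x, hx, rfl⟩ _ ⟨y, hy, rfl⟩
    obtain ⟨z, hz, hzx, hzy⟩ := hxy x hx y hy
    exact ⟨f z, ⟨z, hz, rfl⟩, hf hzx, hf hzy⟩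
  obtain ⟨_, ⟨_, ⟨a, ha, rfl⟩, rfl⟩, hao⟩ := hceB.exists_le_of_sInf_le hfdir
    (by rintro _ ⟨_, ⟨a, _, rfl⟩, rfl⟩; exact hcl a) ho (hfS ▸ hjo)
  exact ⟨a, hceA.sInf_image_finInfs S ▸ sInf_le ⟨a, ha, rfl⟩, hao⟩

theorem stmt7_general {A B C D : Type*} [DistribLattice A] [BoundedOrder A]
    [DistribLattice B] [BoundedOrder B] [CompleteLattice C] [CompleteLattice D]
    (eA : A → C) (eB : B → D)
    (hceA : IsCanonicalExtension eA) (hceB : IsCanonicalExtension eB)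
    (hCj : JoinPerfect C)
    (f : C → D) (hf : Monotone f)
    (hfcE : ClosedEsakia eA f)
    (hcl : ∀ a : A, ClosedElem eB (f (eA a))) :
    ∀ o : D, OpenElem eB o → f ⊥ ≤ o →
      bsq f o = sSup (eA '' {a : A | eA a ≤ bsq f o}) ∧ OpenElem eA (bsq f o) := by
  intro o ho _
  have heq : bsq f o = sSup (eA '' {a : A | eA a ≤ bsq f o}) := by
    refine le_antisymm (sSup_le ?_) (sSup_le (Set.forall_mem_image.2 fun a ha => ha))
    rintro j ⟨hj, hjo⟩
    obtain ⟨a, hja, hao⟩ := exists_le_map_le_of_cjPrime hceA hceB hf hfcE hcl ho hj hjo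
    exact hja.trans (le_sSup ⟨a, le_bsq_of_map_le hCj hf hao, rfl⟩)
  exact ⟨heq, _, heq⟩

/-- Lemma 4.10(1): under the standing hypotheses on `f`, if `o` is open in `D`
and `f ⊥ ≤ o`, then `■_f o` is the join of the embedded lattice elements below
it, and `■_f o` is open in `C`. -/
theorem stmt7 {A B C D : Type*} [DistribLattice A] [BoundedOrder A]
    [DistribLattice B] [BoundedOrder B] [CompleteLattice C] [CompleteLattice D]
    (eA : A → C) (eB : B → D)
    (hceA : IsCanonicalExtension eA) (hceB : IsCanonicalExtension eB)
    (hCj : JoinPerfect C) (hCm : MeetPerfect C)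
    (hDj : JoinPerfect D) (hDm : MeetPerfect D)
    (f : C → D) (hf : Monotone f)
    (hfcE : ClosedEsakia eA f) (hfoE : OpenEsakia eA f)
    (hcl : ∀ a : A, ClosedElem eB (f (eA a)))
    (hadd : ∀ a b : A, f (eA (a ⊔ b)) ≤ f (eA a) ⊔ f (eA b)) :
    ∀ o : D, OpenElem eB o → f ⊥ ≤ o →
      bsq f o = sSup (eA '' {a : A | eA a ≤ bsq f o}) ∧ OpenElem eA (bsq f o) :=
  stmt7_general eA eB hceA hceB hCj f hf hfcE hcl
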